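/- arXiv:1812.11162 — 5 statements merged into one kernel-verified Lean document; each statement's English description precedes it below -/
import Mathlib

section
/- If G = (V, E) is a graph that does not contain the complete bipartite graph K_{r,s} (with 1 ≤ r ≤ s) as a subgraph, then |E| ≤ c_s · |V|^{2 - 1/r}, where c_s is a constant depending only on s. -/
/-!
Double counting: every `r`-set of vertices has fewer than `s` common neighbours, so counting pairs
`(v, T)` with `T` an `r`-subset of `N(v)` gives `∑ᵥ C(dᵥ, r) ≤ (s - 1) C(n, r)`. Since
`(d - r)^r ≤ r! C(d, r)`, the power-mean inequality turns this into
`(∑ᵥ (dᵥ - r))^r ≤ (s - 1) n^(2r - 1)`, hence `2|E| = ∑ᵥ dᵥ ≤ s n^(2 - 1/r) + n r ≤ 2 s n^(2 - 1/r)`.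
-/

open Finset

theorem Nat.cast_le_rpow_of_one_le (n : ℕ) {e : ℝ} (he : 1 ≤ e) : (n : ℝ) ≤ (n : ℝ) ^ e := by
  rcases n.eq_zero_or_pos with rfl | hn
  · simpa using Real.rpow_nonneg le_rfl e
  · exact Real.self_le_rpow_of_one_le (by exact_mod_cast hn) he

theorem Real.le_mul_rpow_two_sub_inv_of_pow_le {x c n : ℝ} {r : ℕ} (hr : 0 < r) (hx : 0 ≤ x)
    (hc : 1 ≤ c) (hn : 0 ≤ n) (h : x ^ r ≤ c * n ^ (2 * r - 1)) :
    x ≤ c * n ^ (2 - 1 / (r : ℝ)) := by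
  have hpow : (n ^ (2 - 1 / (r : ℝ))) ^ r = n ^ (2 * r - 1) := by
    rw [← Real.rpow_mul_natCast hn, ← Real.rpow_natCast]
    congr 1
    push_cast [Nat.cast_sub (by omega : 1 ≤ 2 * r)]
    field_simp
  refine (pow_le_pow_iff_left₀ hx (by positivity) hr.ne').1 ?_
  calc x ^ r ≤ c * n ^ (2 * r - 1) := h
    _ ≤ c ^ r * n ^ (2 * r - 1) := by gcongr; exact le_self_pow₀ hc hr.ne'
    _ = (c * n ^ (2 - 1 / (r : ℝ))) ^ r := by rw [mul_pow, hpow]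

namespace SimpleGraph

variable {V : Type*} [Fintype V] (G : SimpleGraph V) [DecidableRel G.Adj]

def ContainsBiclique (r s : ℕ) : Prop :=
  ∃ A B : Finset V, Disjoint A B ∧ #A = r ∧ #B = s ∧ ∀ a ∈ A, ∀ b ∈ B, G.Adj a b

variable {G}

theorem two_mul_card_edgeFinset_le (r : ℕ) :
    2 * #G.edgeFinset ≤ ∑ v, (G.degree v - r) + Fintype.card V * r := by
  rw [← sum_degrees_eq_twice_card_edges, ← card_univ, ← smul_eq_mul, ← sum_const,
    ← sum_add_distrib]
  exact sum_le_sum fun v _ ↦ le_tsub_add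

variable [DecidableEq V] {r s : ℕ}

theorem card_filter_subset_neighborFinset_lt (h : ¬ G.ContainsBiclique r s) {T : Finset V}
    (hT : #T = r) : #{v | T ⊆ G.neighborFinset v} < s := by
  by_contra! hs
  obtain ⟨B, hB, hBs⟩ := exists_subset_card_eq hs
  refine h ⟨T, B, Finset.disjoint_left.2 fun a haT haB ↦ ?_, hT, hBs, fun a haT b hbB ↦ ?_⟩
  · exact G.irrefl <| (G.mem_neighborFinset a a).1 ((mem_filter.1 (hB haB)).2 haT)
  · exact ((G.mem_neighborFinset b a).1 ((mem_filter.1 (hB hbB)).2 haT)).symm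

theorem sum_choose_degree_le (h : ¬ G.ContainsBiclique r s) :
    ∑ v, (G.degree v).choose r ≤ (s - 1) * (Fintype.card V).choose r := by
  have hdeg (v : V) : (G.degree v).choose r =
      #((univ.powersetCard r).bipartiteAbove (fun v T ↦ T ⊆ G.neighborFinset v) v) := by
    rw [← card_neighborFinset_eq_degree, ← card_powersetCard]
    congr 1
    ext T
    simp [bipartiteAbove, and_comm]
  calc ∑ v, (G.degree v).choose r
      = ∑ T ∈ univ.powersetCard r,
          #(univ.bipartiteBelow (fun v T ↦ T ⊆ G.neighborFinset v) T) := by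
        simp_rw [hdeg]
        exact sum_card_bipartiteAbove_eq_sum_card_bipartiteBelow _
    _ ≤ #(univ.powersetCard r : Finset (Finset V)) • (s - 1) :=
        sum_le_card_nsmul _ _ _ fun T hT ↦ Nat.le_sub_one_of_lt <|
          card_filter_subset_neighborFinset_lt h (mem_powersetCard.1 hT).2
    _ = (s - 1) * (Fintype.card V).choose r := by
        rw [card_powersetCard, card_univ, smul_eq_mul, mul_comm]

theorem sum_degree_sub_pow_le (h : ¬ G.ContainsBiclique r s) (hr : 0 < r) :
    (∑ v, (G.degree v - r)) ^ r ≤ (s - 1) * Fintype.card V ^ (2 * r - 1) := by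
  set n := Fintype.card V
  obtain ⟨k, rfl⟩ : ∃ k, r = k + 1 := Nat.exists_eq_add_one.2 hr
  calc (∑ v, (G.degree v - (k + 1))) ^ (k + 1)
      ≤ n ^ k * ∑ v, (G.degree v - (k + 1)) ^ (k + 1) :=
        pow_sum_le_card_mul_sum_pow (fun _ _ ↦ Nat.zero_le _) k
    _ ≤ n ^ k * ∑ v, (G.degree v).descFactorial (k + 1) := by
        gcongr with v
        exact (Nat.pow_le_pow_left (by omega) _).trans (Nat.pow_sub_le_descFactorial _ _)
    _ = n ^ k * ((k + 1).factorial * ∑ v, (G.degree v).choose (k + 1)) := by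
        simp_rw [Nat.descFactorial_eq_factorial_mul_choose, mul_sum]
    _ ≤ n ^ k * ((k + 1).factorial * ((s - 1) * n.choose (k + 1))) := by
        gcongr
        exact sum_choose_degree_le h
    _ = n ^ k * ((s - 1) * n.descFactorial (k + 1)) := by
        rw [Nat.descFactorial_eq_factorial_mul_choose]
        ring
    _ ≤ n ^ k * ((s - 1) * n ^ (k + 1)) := by
        gcongr
        exact Nat.descFactorial_le_pow _ _
    _ = (s - 1) * n ^ (2 * (k + 1) - 1) := by
        rw [show 2 * (k + 1) - 1 = k + (k + 1) by omega, pow_add]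
        ring

theorem card_edgeFinset_le_mul_rpow (h : ¬ G.ContainsBiclique r s) (hr : 0 < r) (hrs : r ≤ s) :
    (#G.edgeFinset : ℝ) ≤ s * (Fintype.card V : ℝ) ^ (2 - 1 / (r : ℝ)) := by
  set n := Fintype.card V
  have hs : (1 : ℝ) ≤ s := by exact_mod_cast hr.trans_le hrs
  have hsum : ((∑ v, (G.degree v - r) : ℕ) : ℝ) ≤ s * (n : ℝ) ^ (2 - 1 / (r : ℝ)) := by
    refine Real.le_mul_rpow_two_sub_inv_of_pow_le hr (by positivity) hs (by positivity) ?_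
    exact_mod_cast (sum_degree_sub_pow_le h hr).trans (Nat.mul_le_mul_right _ (s.sub_le 1))
  have hn : (n : ℝ) * r ≤ s * (n : ℝ) ^ (2 - 1 / (r : ℝ)) := by
    have hinv : 1 / (r : ℝ) ≤ 1 := by
      rw [div_le_one (by positivity)]
      exact_mod_cast hr
    rw [mul_comm]
    gcongr
    exact n.cast_le_rpow_of_one_le (by linarith)
  have hedge : (2 * #G.edgeFinset : ℝ) ≤ (∑ v, (G.degree v - r) : ℕ) + n * r := by
    exact_mod_cast two_mul_card_edgeFinset_le r
  linarith

end SimpleGraph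

/-- Kővári–Sós–Turán: a graph with no `K_{r,s}` (with `1 ≤ r ≤ s`) has at most
`c_s * |V|^(2 - 1/r)` edges, where `c_s` depends only on `s`. -/
theorem stmt0 (s : ℕ) :
    ∃ c : ℝ, 0 < c ∧ ∀ (r : ℕ), 1 ≤ r → r ≤ s →
      ∀ (V : Type) [Fintype V] (G : SimpleGraph V) [DecidableRel G.Adj],
        (¬ ∃ (A B : Finset V), Disjoint A B ∧ A.card = r ∧ B.card = s ∧
            ∀ a ∈ A, ∀ b ∈ B, G.Adj a b) →
        (G.edgeFinset.card : ℝ) ≤ c * (Fintype.card V : ℝ) ^ ((2 : ℝ) - 1 / (r : ℝ)) := by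
  classical
  refine ⟨s + 1, by positivity, fun r hr hrs V _ G _ h ↦ ?_⟩
  refine (SimpleGraph.card_edgeFinset_le_mul_rpow h hr hrs).trans ?_
  gcongr
  linarith
end

section
/- For every k ≥ 1 there exists an infinite strictly increasing sequence 1 = a₁ < a₂ < ⋯ of positive integers with a_m ≤ 2⁸ k⁴ m³ for all m, such that for every choice of integers u₁, u₂, u₃, u₄ with |u_i| ≤ k and u₁ + u₂ + u₃ + u₄ = 0, the equation u₁x₁ + u₂x₂ + u₃x₃ + u₄x₄ = 0 has only trivial solutions with x₁, x₂, x₃, x₄ ∈ {a₁, a₂, …}. -/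
/-- A solution `(x 0, x 1, x 2, x 3)` of `∑ u i * x i = 0` is trivial if, grouping the
indices by equal values of `x`, the sum of the coefficients `u i` in each group is `0`. -/
def IsTrivialSol (u x : Fin 4 → ℤ) : Prop :=
  ∀ i, ∑ j ∈ Finset.univ.filter (fun j => x j = x i), u j = 0

/-- `A` is a `k`-fold Sidon set: every equation `u₁x₁ + u₂x₂ + u₃x₃ + u₄x₄ = 0` with
`|uᵢ| ≤ k` and `u₁ + u₂ + u₃ + u₄ = 0` has only trivial solutions in `A`. -/
def IsKFoldSidon (k : ℤ) (A : Set ℤ) : Prop :=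
  ∀ u x : Fin 4 → ℤ, (∀ i, |u i| ≤ k) → (∑ i, u i) = 0 →
    (∀ i, x i ∈ A) → (∑ i, u i * x i) = 0 → IsTrivialSol u x

/-!
The sequence is built greedily: each term is the least integer beyond the previous one that
cannot complete a nontrivial solution with earlier terms. If `A` is `k`-fold Sidon and `x` lies
in a nontrivial solution over `A ∪ {x}`, the coefficient sum `s` of the block of `x` is nonzero
(otherwise replacing `x` by an element of `A` gives a nontrivial solution in `A`), so
`s x = -(t₁b₁ + t₂b₂ + t₃b₃)` with `0 < |s| ≤ 4k`, `|tⱼ| ≤ k`, `bⱼ ∈ A`. Hence at most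
`(8k+1)(2k+1)³|A|³` integers are forbidden by `A`, and since every integer in `[1, aₘ]` is a term
or forbidden by `{a₀, …, aₘ}`, we get `aₘ ≤ (m+1) + (8k+1)(2k+1)³(m+1)³ ≤ 2⁸k⁴(m+1)³`.
-/

open Finset

namespace IsKFoldSidon

variable {k : ℤ}

theorem mono {A B : Set ℤ} (hB : IsKFoldSidon k B) (hAB : A ⊆ B) : IsKFoldSidon k A :=
  fun u x hu hu0 hx hsum => hB u x hu hu0 (fun i => hAB (hx i)) hsum

theorem singleton (a : ℤ) : IsKFoldSidon k {a} := by
  intro u x _ hu0 hx _ i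
  rwa [filter_true_of_mem fun j _ => (hx j).trans (hx i).symm]

theorem iUnion_of_monotone {A : ℕ → Set ℤ} (hmono : Monotone A)
    (hA : ∀ m, IsKFoldSidon k (A m)) : IsKFoldSidon k (⋃ m, A m) := by
  intro u x hu hu0 hx hsum
  choose n hn using fun i => Set.mem_iUnion.1 (hx i)
  exact hA (univ.sup n) u x hu hu0 (fun i => hmono (le_sup (mem_univ i)) (hn i)) hsum

end IsKFoldSidon

theorem IsTrivialSol.of_replace {u v : Fin 4 → ℤ} {x a : ℤ}
    (hx : ∑ j with v j = x, u j = 0) (h : IsTrivialSol u fun i => if v i = x then a else v i) :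
    IsTrivialSol u v := by
  intro i
  by_cases hi : v i = x
  · simpa only [hi] using hx
  · have hsplit : ∀ j, (if (if v j = x then a else v j) = v i then u j else 0) =
        (if v j = v i then u j else 0) +
          (if a = v i then 1 else 0) * if v j = x then u j else 0 := by
      intro j
      by_cases hj : v j = x
      · simp [hj, Ne.symm hi]
      · simp [hj]
    have hw := h i
    simp only [if_neg hi] at hw
    rw [sum_filter] at hx
    rwa [sum_filter, sum_congr rfl fun j _ => hsplit j, sum_add_distrib, ← mul_sum, hx, mul_zero,
      add_zero, ← sum_filter] at hw

theorem sum_mul_ite_eq {ι R : Type*} [Fintype ι] [CommRing R] [DecidableEq R] (u v : ι → R)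
    (x c : R) :
    ∑ i, u i * (if v i = x then c else v i) =
      (∑ i with v i = x, u i) * c + ∑ i, if v i = x then 0 else u i * v i := by
  rw [sum_filter, sum_mul, ← sum_add_distrib]
  refine sum_congr rfl fun i _ => ?_
  split_ifs <;> ring

noncomputable def forbiddenValues (k : ℤ) (A : Finset ℤ) : Finset ℤ :=
  (Icc (-(4 * k)) (4 * k) ×ˢ Fintype.piFinset (fun _ : Fin 3 => Icc (-k) k) ×ˢ
      Fintype.piFinset (fun _ : Fin 3 => A)).image
    fun p => -(∑ j, p.2.1 j * p.2.2 j) / p.1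

theorem mem_forbiddenValues {k s x : ℤ} {A : Finset ℤ} {t b : Fin 3 → ℤ} (hs : s ≠ 0)
    (hsk : |s| ≤ 4 * k) (ht : ∀ j, |t j| ≤ k) (hb : ∀ j, b j ∈ A)
    (h : s * x = -∑ j, t j * b j) : x ∈ forbiddenValues k A :=
  mem_image.2 ⟨(s, t, b), by simp [abs_le.1 hsk, fun j => abs_le.1 (ht j), hb],
    by rw [← h]; exact Int.mul_ediv_cancel_left x hs⟩

theorem forbiddenValues_mono (k : ℤ) : Monotone (forbiddenValues k) := by
  intro A B hAB
  unfold forbiddenValues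
  gcongr
  exact Fintype.piFinset_subset _ _ fun _ => hAB

theorem card_forbiddenValues_le {k : ℤ} (hk : 0 ≤ k) (A : Finset ℤ) :
    (#(forbiddenValues k A) : ℤ) ≤ (8 * k + 1) * (2 * k + 1) ^ 3 * #A ^ 3 := by
  have hcard : ∀ c : ℤ, 0 ≤ c → (#(Icc (-c) c) : ℤ) = 2 * c + 1 := fun c hc => by
    rw [Int.card_Icc, Int.toNat_of_nonneg (by omega)]; ring
  calc (#(forbiddenValues k A) : ℤ)
      ≤ #(Icc (-(4 * k)) (4 * k) ×ˢ Fintype.piFinset (fun _ : Fin 3 => Icc (-k) k) ×ˢ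
          Fintype.piFinset (fun _ : Fin 3 => A)) := mod_cast card_image_le
    _ = (8 * k + 1) * (2 * k + 1) ^ 3 * #A ^ 3 := by
      simp only [card_product, Fintype.card_piFinset, prod_const, card_univ, Fintype.card_fin]
      push_cast
      rw [hcard _ (by omega), hcard _ hk]
      ring

theorem IsKFoldSidon.insert {k x a : ℤ} {A : Finset ℤ} (hA : IsKFoldSidon k A) (ha : a ∈ A)
    (hx : x ∉ forbiddenValues k A) : IsKFoldSidon k ↑(insert x A) := by
  intro u v hu hu0 hv hsum
  set w : Fin 4 → ℤ := fun i => if v i = x then a else v i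
  have hw : ∀ i, w i ∈ A := fun i => by
    by_cases h : v i = x
    · simpa [w, h] using ha
    · simpa [w, h] using hv i
  set s := ∑ j with v j = x, u j
  have hsx : s * x + ∑ i, (if v i = x then 0 else u i * v i) = 0 := by
    rw [← sum_mul_ite_eq, ← hsum]
    exact sum_congr rfl fun i _ => by split_ifs with h <;> simp [h]
  by_cases hs : s = 0
  · refine IsTrivialSol.of_replace hs (hA u w hu hu0 hw ?_)
    rw [sum_mul_ite_eq]
    change s * a + _ = 0
    linear_combination hsx + (a - x) * hs
  obtain ⟨i₀, hi₀, -⟩ := exists_ne_zero_of_sum_ne_zero hs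
  set t : Fin 4 → ℤ := fun i => if v i = x then 0 else u i
  have hk : 0 ≤ k := (abs_nonneg _).trans (hu 0)
  have hsk : |s| ≤ 4 * k := calc
    |s| ≤ ∑ j with v j = x, |u j| := abs_sum_le_sum_abs _ _
    _ ≤ ∑ j, |u j| :=
      sum_le_sum_of_subset_of_nonneg (filter_subset _ _) fun j _ _ => abs_nonneg _
    _ ≤ ∑ _j : Fin 4, k := sum_le_sum fun j _ => hu j
    _ = 4 * k := by simp
  have htk : ∀ i, |t i| ≤ k := fun i => by
    by_cases h : v i = x
    · simpa [t, h] using hk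
    · simpa [t, h] using hu i
  -- the block of `x` contains `i₀`, so at most three other terms remain
  have hrest : ∑ i, (if v i = x then 0 else u i * v i) =
      ∑ j, t (i₀.succAbove j) * w (i₀.succAbove j) := by
    rw [Fin.sum_univ_succAbove _ i₀, if_pos (mem_filter.1 hi₀).2, zero_add]
    exact sum_congr rfl fun j _ => by by_cases h : v (i₀.succAbove j) = x <;> simp [t, w, h]
  exact absurd (mem_forbiddenValues hs hsk (fun j => htk _) (fun j => hw _) (by linarith)) hx

theorem Int.exists_gt_notMem_Ioo_subset (S : Finset ℤ) (p : ℤ) :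
    ∃ y, p < y ∧ y ∉ S ∧ Ioo p y ⊆ S := by
  obtain ⟨y₀, hpy₀, hy₀S⟩ := ((Set.Ioi_infinite p).sdiff S.finite_toSet).nonempty
  obtain ⟨y, ⟨hpy, hyS⟩, hmin⟩ :=
    Int.exists_least_of_bdd (P := fun y => p < y ∧ y ∉ S) ⟨p, fun z hz => hz.1.le⟩ ⟨y₀, hpy₀, hy₀S⟩
  refine ⟨y, hpy, hyS, fun z hz => ?_⟩
  rw [mem_Ioo] at hz
  by_contra hzS
  exact (hmin z ⟨hz.1, hzS⟩).not_gt hz.2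

noncomputable def nextOutside (S : Finset ℤ) (p : ℤ) : ℤ :=
  (Int.exists_gt_notMem_Ioo_subset S p).choose

theorem lt_nextOutside (S : Finset ℤ) (p : ℤ) : p < nextOutside S p :=
  (Int.exists_gt_notMem_Ioo_subset S p).choose_spec.1

theorem nextOutside_notMem (S : Finset ℤ) (p : ℤ) : nextOutside S p ∉ S :=
  (Int.exists_gt_notMem_Ioo_subset S p).choose_spec.2.1

theorem Ioo_nextOutside_subset (S : Finset ℤ) (p : ℤ) : Ioo p (nextOutside S p) ⊆ S :=
  (Int.exists_gt_notMem_Ioo_subset S p).choose_spec.2.2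

/-- The pair `(aₘ, {a₀, …, aₘ})` of the greedy construction. -/
noncomputable def greedySidon (k : ℤ) : ℕ → ℤ × Finset ℤ
  | 0 => (1, {1})
  | m + 1 =>
    let y := nextOutside (forbiddenValues k (greedySidon k m).2) (greedySidon k m).1
    (y, insert y (greedySidon k m).2)

namespace greedySidon

variable (k : ℤ)

theorem fst_mem : ∀ m, (greedySidon k m).1 ∈ (greedySidon k m).2
  | 0 => mem_singleton_self 1
  | _ + 1 => mem_insert_self _ _

theorem snd_mono : Monotone fun m => (greedySidon k m).2 :=
  monotone_nat_of_le_succ fun _ => subset_insert _ _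

theorem fst_strictMono : StrictMono fun m => (greedySidon k m).1 :=
  strictMono_nat_of_lt_succ fun _ => lt_nextOutside _ _

theorem card_snd_le : ∀ m, #(greedySidon k m).2 ≤ m + 1
  | 0 => by simp [greedySidon]
  | m + 1 => (card_insert_le _ _).trans (Nat.succ_le_succ (card_snd_le m))

theorem isKFoldSidon_snd : ∀ m, IsKFoldSidon k ↑(greedySidon k m).2
  | 0 => by simpa [greedySidon] using IsKFoldSidon.singleton 1
  | m + 1 => (isKFoldSidon_snd m).insert (fst_mem k m) (nextOutside_notMem _ _)

theorem Icc_subset : ∀ m, Icc 1 (greedySidon k m).1 ⊆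
    (greedySidon k m).2 ∪ forbiddenValues k (greedySidon k m).2
  | 0 => by simp [greedySidon]
  | m + 1 => by
    have hmono : (greedySidon k m).2 ∪ forbiddenValues k (greedySidon k m).2 ⊆
        (greedySidon k (m + 1)).2 ∪ forbiddenValues k (greedySidon k (m + 1)).2 :=
      union_subset_union (snd_mono k m.le_succ) (forbiddenValues_mono k (snd_mono k m.le_succ))
    intro z hz
    rw [mem_Icc] at hz
    rcases le_or_gt z (greedySidon k m).1 with hzm | hzm
    · exact hmono (Icc_subset m (mem_Icc.2 ⟨hz.1, hzm⟩))
    rcases hz.2.lt_or_eq with hzy | rfl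
    · exact hmono (mem_union_right _ (Ioo_nextOutside_subset _ _ (mem_Ioo.2 ⟨hzm, hzy⟩)))
    · exact mem_union_left _ (fst_mem k (m + 1))

theorem fst_le {k : ℤ} (hk : 1 ≤ k) (m : ℕ) :
    (greedySidon k m).1 ≤ 2 ^ 8 * k ^ 4 * ((m : ℤ) + 1) ^ 3 := by
  set p := (greedySidon k m).1
  set A := (greedySidon k m).2
  have hp : p ≤ #A + #(forbiddenValues k A) := calc
    p ≤ #(Icc 1 p) := by simp [Int.card_Icc]
    _ ≤ #(A ∪ forbiddenValues k A) := mod_cast card_le_card (Icc_subset k m)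
    _ ≤ #A + #(forbiddenValues k A) := mod_cast card_union_le _ _
  have hA : (#A : ℤ) ≤ m + 1 := mod_cast card_snd_le k m
  have hcoeff : (8 * k + 1) * (2 * k + 1) ^ 3 ≤ 243 * k ^ 4 := calc
    (8 * k + 1) * (2 * k + 1) ^ 3 ≤ (9 * k) * (3 * k) ^ 3 := by gcongr <;> omega
    _ = 243 * k ^ 4 := by ring
  have hforb : (#(forbiddenValues k A) : ℤ) ≤ 243 * k ^ 4 * ((m : ℤ) + 1) ^ 3 :=
    (card_forbiddenValues_le (by omega) A).trans
      (mul_le_mul hcoeff (pow_le_pow_left₀ (by positivity) hA 3) (by positivity) (by positivity))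
  have hlin : (m : ℤ) + 1 ≤ k ^ 4 * ((m : ℤ) + 1) ^ 3 :=
    calc (m : ℤ) + 1 ≤ ((m : ℤ) + 1) ^ 3 := le_self_pow₀ (by omega) (by norm_num)
      _ ≤ k ^ 4 * ((m : ℤ) + 1) ^ 3 := le_mul_of_one_le_left (by positivity) (one_le_pow₀ hk)
  linarith

end greedySidon

-- `a m` is the `(m + 1)`-st term of the sequence, hence the bound in terms of `m + 1`.
/-- There is an infinite strictly increasing sequence `1 = a₀ < a₁ < ⋯` of integers
with `a m ≤ 2⁸ k⁴ (m+1)³` (i.e. the `m`-th term, counted from `1`, is at most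
`2⁸ k⁴ m³`) whose range is a `k`-fold Sidon set. -/
theorem stmt4 (k : ℤ) (hk : 1 ≤ k) :
    ∃ a : ℕ → ℤ, a 0 = 1 ∧ StrictMono a ∧
      (∀ m : ℕ, a m ≤ 2 ^ 8 * k ^ 4 * ((m : ℤ) + 1) ^ 3) ∧
      IsKFoldSidon k (Set.range a) := by
  refine ⟨fun m => (greedySidon k m).1, rfl, greedySidon.fst_strictMono k,
    greedySidon.fst_le hk, ?_⟩
  have hmono : Monotone fun m => ((greedySidon k m).2 : Set ℤ) :=
    fun _ _ h => coe_subset.2 (greedySidon.snd_mono k h)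
  refine (IsKFoldSidon.iUnion_of_monotone hmono (greedySidon.isKFoldSidon_snd k)).mono ?_
  exact Set.range_subset_iff.2 fun m => Set.mem_iUnion.2 ⟨m, greedySidon.fst_mem k m⟩
end

section
/- For every N > 1 there exists a Sidon set A ⊆ {1, …, N} with |A| ≥ c√N for an absolute constant c > 0, and every Sidon set A ⊆ {1, …, N} satisfies |A| ≤ C√N for an absolute constant C. -/
/-!
Upper bound: the differences `a - b` of distinct elements of a Sidon set are pairwise distinct
and lie in `[1 - N, N - 1] \ {0}`, so `|A| (|A| - 1) ≤ 2N`.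

Lower bound (Erdős–Turán): for an odd prime `p` the numbers `2p i + (i² mod p)`, `i < p`,
form a Sidon set in `[0, 2p²)`. A sum of two of them determines `a + b` (quotient by `2p`) and
`a² + b² mod p` (remainder), hence `{a, b}` over `ZMod p`. Bertrand's postulate provides a
prime `p` with `2p² ≤ N < 8p²`.
-/

/-- `A` is a Sidon set: `x + y = u + v` with all variables in `A` has only the
trivial solutions `{x, y} = {u, v}`. -/
def IsSidon (A : Set ℤ) : Prop :=
  ∀ x ∈ A, ∀ y ∈ A, ∀ u ∈ A, ∀ v ∈ A,
    x + y = u + v → (x = u ∧ y = v) ∨ (x = v ∧ y = u)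

open Finset

theorem eq_and_eq_or_eq_and_eq_of_add_eq_add_of_sq_add_sq_eq {R : Type*} [CommRing R]
    [NoZeroDivisors R] (h2 : (2 : R) ≠ 0) {a b c d : R} (hs : a + b = c + d)
    (hq : a ^ 2 + b ^ 2 = c ^ 2 + d ^ 2) : (a = c ∧ b = d) ∨ (a = d ∧ b = c) := by
  have hsq : (a - b) ^ 2 = (c - d) ^ 2 := by linear_combination 2 * hq - (a + b + c + d) * hs
  rcases (Commute.all _ _).sq_eq_sq_iff_eq_or_eq_neg.mp hsq with h | h
  · have hac : a = c := mul_left_cancel₀ h2 (by linear_combination h + hs)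
    exact .inl ⟨hac, by linear_combination hs - hac⟩
  · have had : a = d := mul_left_cancel₀ h2 (by linear_combination h + hs)
    exact .inr ⟨had, by linear_combination hs - had⟩

theorem Nat.eq_and_eq_of_mul_add_eq_mul_add {n q r q' r' : ℕ} (hr : r < n) (hr' : r' < n)
    (h : n * q + r = n * q' + r') : q = q' ∧ r = r' := by
  have hn : 0 < n := by omega
  have hq : q = q' := by
    simpa [Nat.mul_add_div hn, Nat.div_eq_of_lt hr, Nat.div_eq_of_lt hr'] using
      congrArg (· / n) h
  subst hq
  exact ⟨rfl, by omega⟩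

section UpperBound

variable {A : Finset ℤ}

theorem IsSidon.injOn_sub_offDiag (hA : IsSidon ↑A) :
    Set.InjOn (fun q : ℤ × ℤ => q.1 - q.2) ↑A.offDiag := by
  rintro ⟨a, b⟩ hab ⟨c, d⟩ hcd hsub
  simp only [coe_offDiag, Set.mem_offDiag, mem_coe] at hab hcd
  rcases hA a hab.1 d hcd.2.1 c hcd.1 b hab.2.1 (by linarith) with ⟨hac, hdb⟩ | ⟨hab', -⟩
  · rw [hac, hdb]
  · exact absurd hab' hab.2.2

theorem IsSidon.card_mul_card_le {N : ℕ} (hAN : ↑A ⊆ Set.Icc (1 : ℤ) N) (hA : IsSidon ↑A) :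
    #A * #A ≤ 2 * N + #A := by
  have hdiff : #A.offDiag ≤ #(Icc (1 - (N : ℤ)) (N - 1)) := by
    refine card_le_card_of_injOn _ (fun q hq => ?_) hA.injOn_sub_offDiag
    simp only [coe_offDiag, Set.mem_offDiag, mem_coe] at hq
    have h1 := hAN hq.1
    have h2 := hAN hq.2.1
    simp only [Set.mem_Icc, coe_Icc] at h1 h2 ⊢
    omega
  rw [offDiag_card, Int.card_Icc] at hdiff
  omega

theorem IsSidon.card_le_two_mul_sqrt {N : ℕ} (hN : 0 < N) (hAN : ↑A ⊆ Set.Icc (1 : ℤ) N)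
    (hA : IsSidon ↑A) : (#A : ℝ) ≤ 2 * √N := by
  have hk : (#A : ℝ) * #A ≤ 2 * N + #A := by exact_mod_cast hA.card_mul_card_le hAN
  have hs : √N ^ 2 = N := Real.sq_sqrt (Nat.cast_nonneg N)
  have hs1 : 1 ≤ √N := Real.one_le_sqrt.mpr (by exact_mod_cast hN)
  nlinarith

end UpperBound

def erdosTuranSet (p : ℕ) : Finset ℤ :=
  (range p).image fun i => ((2 * p * i + i ^ 2 % p + 1 : ℕ) : ℤ)

theorem coe_erdosTuranSet_subset_Icc (p : ℕ) :
    ↑(erdosTuranSet p) ⊆ Set.Icc (1 : ℤ) (2 * p ^ 2 : ℕ) := by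
  intro x hx
  simp only [erdosTuranSet, coe_image, coe_range, Set.mem_image, Set.mem_Iio] at hx
  obtain ⟨i, hi, rfl⟩ := hx
  have hr : i ^ 2 % p < p := Nat.mod_lt _ (by omega)
  have hle : 2 * p * i + i ^ 2 % p + 1 ≤ 2 * p ^ 2 := by nlinarith
  exact ⟨by exact_mod_cast Nat.le_add_left 1 _, by exact_mod_cast hle⟩

theorem card_erdosTuranSet (p : ℕ) : #(erdosTuranSet p) = p := by
  rw [erdosTuranSet, card_image_of_injOn, card_range]
  intro i hi j hj hij
  simp only [coe_range, Set.mem_Iio] at hi hj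
  have hij := Nat.add_right_cancel (Nat.cast_injective (R := ℤ) hij)
  have hp : 0 < p := by omega
  exact (Nat.eq_and_eq_of_mul_add_eq_mul_add (by linarith [Nat.mod_lt (i ^ 2) hp])
    (by linarith [Nat.mod_lt (j ^ 2) hp]) hij).1

theorem isSidon_erdosTuranSet {p : ℕ} [Fact p.Prime] (hp : p ≠ 2) :
    IsSidon ↑(erdosTuranSet p) := by
  have hp0 : 0 < p := (Fact.out : p.Prime).pos
  have h2 : (2 : ZMod p) ≠ 0 := Ring.two_ne_zero (by rwa [ZMod.ringChar_zmod_n])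
  have hcast : ∀ {x y : ℕ}, x < p → y < p → (x : ZMod p) = y → x = y := fun hx hy h => by
    rwa [ZMod.natCast_eq_natCast_iff', Nat.mod_eq_of_lt hx, Nat.mod_eq_of_lt hy] at h
  intro x hx y hy u hu v hv hsum
  simp only [erdosTuranSet, coe_image, coe_range, Set.mem_image, Set.mem_Iio] at hx hy hu hv
  obtain ⟨a, ha, rfl⟩ := hx
  obtain ⟨b, hb, rfl⟩ := hy
  obtain ⟨c, hc, rfl⟩ := hu
  obtain ⟨d, hd, rfl⟩ := hv
  have hnat : 2 * p * (a + b) + (a ^ 2 % p + b ^ 2 % p)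
      = 2 * p * (c + d) + (c ^ 2 % p + d ^ 2 % p) := by
    have : (2 * p * a + a ^ 2 % p + 1) + (2 * p * b + b ^ 2 % p + 1)
        = (2 * p * c + c ^ 2 % p + 1) + (2 * p * d + d ^ 2 % p + 1) := by exact_mod_cast hsum
    linarith
  have hmod : ∀ i, i ^ 2 % p < p := fun i => Nat.mod_lt _ hp0
  obtain ⟨hs, hq⟩ := Nat.eq_and_eq_of_mul_add_eq_mul_add
    (by linarith [hmod a, hmod b]) (by linarith [hmod c, hmod d]) hnat
  have hs' : (a : ZMod p) + b = c + d := by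
    exact_mod_cast congrArg (Nat.cast : ℕ → ZMod p) hs
  have hq' : (a : ZMod p) ^ 2 + (b : ZMod p) ^ 2 = (c : ZMod p) ^ 2 + (d : ZMod p) ^ 2 := by
    simpa [ZMod.natCast_mod] using congrArg (Nat.cast : ℕ → ZMod p) hq
  rcases eq_and_eq_or_eq_and_eq_of_add_eq_add_of_sq_add_sq_eq h2 hs' hq'
    with ⟨hac, hbd⟩ | ⟨had, hbc⟩
  · rw [hcast ha hc hac, hcast hb hd hbd]; exact .inl ⟨rfl, rfl⟩
  · rw [hcast ha hd had, hcast hb hc hbc]; exact .inr ⟨rfl, rfl⟩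

theorem exists_isSidon_subset_Icc_sqrt_le (N : ℕ) (hN : 0 < N) :
    ∃ A : Finset ℤ, ↑A ⊆ Set.Icc (1 : ℤ) N ∧ IsSidon ↑A ∧ √N ≤ 6 * #A := by
  by_cases hsmall : N < 32
  · refine ⟨{1}, by simpa using (show 1 ≤ N by omega), ?_, ?_⟩
    · simp +contextual [IsSidon]
    · rw [card_singleton, Nat.cast_one, Real.sqrt_le_left (by norm_num)]
      exact_mod_cast (by omega : N ≤ 36)
  set m := Nat.sqrt (N / 8)
  have hm : 2 ≤ m := Nat.le_sqrt.mpr (by omega)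
  obtain ⟨p, hp, hmp, hpm⟩ := Nat.exists_prime_lt_and_le_two_mul m (by omega)
  have := Fact.mk hp
  have hm2 : m ^ 2 ≤ N / 8 := Nat.sqrt_le' _
  have hm1 : N / 8 < (m + 1) ^ 2 := Nat.lt_succ_sqrt' _
  have hpN : 2 * p ^ 2 ≤ N := by
    have := Nat.pow_le_pow_left hpm 2
    have := Nat.mul_div_le N 8
    nlinarith
  have hNp : N ≤ 8 * p ^ 2 := by
    have := Nat.pow_le_pow_left (show m + 1 ≤ p from hmp) 2
    omega
  refine ⟨erdosTuranSet p, (coe_erdosTuranSet_subset_Icc p).trans ?_,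
    isSidon_erdosTuranSet (by omega), ?_⟩
  · exact Set.Icc_subset_Icc le_rfl (by exact_mod_cast hpN)
  · rw [card_erdosTuranSet, Real.sqrt_le_left (by positivity)]
    exact_mod_cast (by nlinarith : N ≤ (6 * p) ^ 2)

/-- For every `N > 1` there is a Sidon set `A ⊆ {1, …, N}` with `|A| ≥ c √N`, and
every Sidon set in `{1, …, N}` has size at most `C √N`, for absolute constants. -/
theorem stmt7 :
    ∃ c C : ℝ, 0 < c ∧ 0 < C ∧ ∀ N : ℕ, 1 < N →
      (∃ A : Finset ℤ, ↑A ⊆ Set.Icc (1 : ℤ) (N : ℤ) ∧ IsSidon ↑A ∧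
        c * Real.sqrt N ≤ (A.card : ℝ)) ∧
      (∀ A : Finset ℤ, ↑A ⊆ Set.Icc (1 : ℤ) (N : ℤ) → IsSidon ↑A →
        (A.card : ℝ) ≤ C * Real.sqrt N) := by
  refine ⟨1 / 6, 2, by norm_num, by norm_num, fun N hN => ⟨?_, fun A hAN hA =>
    hA.card_le_two_mul_sqrt (by omega) hAN⟩⟩
  obtain ⟨A, hAN, hA, hcard⟩ := exists_isSidon_subset_Icc_sqrt_le N (by omega)
  exact ⟨A, hAN, hA, by linarith⟩
end

section
/- Let M be a Sidon set of integers (slopes) and let A be a set of integers that is a k-fold Sidon set where k exceeds the maximum of |m − m'| over m, m' ∈ M. Consider the family L of lines y = m x + b with m ∈ M and b an integer. Then there are no four distinct lines ℓ₁, ℓ₂, ℓ₃, ℓ₄ ∈ L and four distinct points p₁, p₂, p₃, p₄ with x-coordinates in A such that ℓ₁ ∩ ℓ₂ = {p₁}, ℓ₂ ∩ ℓ₃ = {p₂}, ℓ₃ ∩ ℓ₄ = {p₃}, ℓ₄ ∩ ℓ₁ = {p₄}. -/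
/-- With slopes from a Sidon set `M` and `x`-coordinates from a `k`-fold Sidon set `A`
(where `k` exceeds all differences of slopes), lines `y = m x + b` (`m ∈ M`, `b ∈ ℤ`)
admit no 4-cycle: there are no four distinct lines `ℓ₁, ℓ₂, ℓ₃, ℓ₄` and four distinct
points `p₁, p₂, p₃, p₄` (with `x`-coordinates in `A`) with `pᵢ = ℓᵢ ∩ ℓᵢ₊₁` cyclically. -/
theorem stmt8 (M : Finset ℤ) (A : Set ℤ) (k : ℤ)
    (hM : IsSidon ↑M) (hA : IsKFoldSidon k A)
    (hk : ∀ m ∈ M, ∀ m' ∈ M, |m - m'| < k) :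
    ¬ ∃ (l : Fin 4 → ℤ × ℤ) (p : Fin 4 → ℤ × ℤ),
        (∀ i, (l i).1 ∈ M) ∧ Function.Injective l ∧ Function.Injective p ∧
        (∀ i, (p i).1 ∈ A) ∧
        (∀ i, (p i).2 = (l i).1 * (p i).1 + (l i).2 ∧
              (p i).2 = (l (i + 1)).1 * (p i).1 + (l (i + 1)).2) := by
  rintro ⟨l, p, hMmem, hlinj, hpinj, hxA, hEq⟩
  set u : Fin 4 → ℤ := fun i => (l i).1 - (l (i + 1)).1 with hu_def
  set x : Fin 4 → ℤ := fun i => (p i).1 with hx_def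
  have hne : ∀ i : Fin 4, i ≠ i + 1 := by decide
  have key : ∀ i, u i * x i = (l (i + 1)).2 - (l i).2 := by
    intro i
    have h1 := (hEq i).1
    have h2 := (hEq i).2
    simp only [hu_def, hx_def]
    linear_combination h2 - h1
  have hu0 : ∀ i, u i ≠ 0 := by
    intro i h
    have hm : (l i).1 = (l (i + 1)).1 := by
      have := sub_eq_zero.mp h
      simpa using this
    have hb : (l i).2 = (l (i + 1)).2 := by
      have hk := key i
      rw [h] at hk
      simp at hk
      linarith
    exact hne i (hlinj (Prod.ext hm hb))
  have hadj : ∀ i : Fin 4, x i ≠ x (i + 1) := by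
    intro i h
    have h1 := (hEq i).2
    have h2 := (hEq (i + 1)).1
    have hx1 : (p i).1 = (p (i + 1)).1 := h
    have hx2 : (p i).2 = (p (i + 1)).2 := by rw [h1, h2, hx1]
    exact hne i (hpinj (Prod.ext hx1 hx2))
  have e0 : (0 + 1 : Fin 4) = 1 := rfl
  have e1 : (1 + 1 : Fin 4) = 2 := rfl
  have e2 : (2 + 1 : Fin 4) = 3 := rfl
  have e3 : (3 + 1 : Fin 4) = 0 := rfl
  have husum : (∑ i, u i) = 0 := by
    rw [Fin.sum_univ_four]
    simp only [hu_def, e0, e1, e2, e3]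
    ring
  have husumx : (∑ i, u i * x i) = 0 := by
    rw [Fin.sum_univ_four, key 0, key 1, key 2, key 3, e0, e1, e2, e3]
    ring
  have hule : ∀ i, |u i| ≤ k := fun i =>
    le_of_lt (hk _ (hMmem i) _ (hMmem (i + 1)))
  have ht := hA u x hule husum (fun i => hxA i) husumx
  have t0 := ht 0
  have t1 := ht 1
  rw [Finset.sum_filter, Fin.sum_univ_four] at t0 t1
  have h01 : x 0 ≠ x 1 := by have := hadj 0; rwa [e0] at this
  have h12 : x 1 ≠ x 2 := by have := hadj 1; rwa [e1] at this
  have h30 : x 3 ≠ x 0 := by have := hadj 3; rwa [e3] at this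
  by_cases h02 : x 0 = x 2
  · by_cases h13 : x 1 = x 3
    · rw [if_pos rfl, if_neg (Ne.symm h01), if_pos h02.symm, if_neg h30] at t0
      rw [if_neg h01, if_pos rfl, if_neg (Ne.symm h12), if_pos h13.symm] at t1
      -- t0 : u 0 + 0 + u 2 + 0 = 0, t1 : 0 + u 1 + 0 + u 3 = 0
      have hsum02 : (l 0).1 + (l 2).1 = (l 1).1 + (l 3).1 := by
        have hh0 : u 0 = (l 0).1 - (l 1).1 := by rw [hu_def]; simp [e0]
        have hh2 : u 2 = (l 2).1 - (l 3).1 := by rw [hu_def]; simp [e2]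
        rw [hh0, hh2] at t0
        linarith
      have hmem : ∀ i : Fin 4, (l i).1 ∈ (↑M : Set ℤ) :=
        fun i => Finset.mem_coe.mpr (hMmem i)
      rcases hM _ (hmem 0) _ (hmem 2) _ (hmem 1) _ (hmem 3) hsum02 with
        ⟨h, _⟩ | ⟨h, _⟩
      · apply hu0 0
        rw [hu_def]; simp [e0, sub_eq_zero]; exact h
      · apply hu0 3
        rw [hu_def]; simp [e3, sub_eq_zero]; exact h.symm
    · rw [if_neg h01, if_pos rfl, if_neg (Ne.symm h12),
        if_neg (fun hh => h13 hh.symm)] at t1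
      apply hu0 1
      linarith
  · rw [if_pos rfl, if_neg (Ne.symm h01), if_neg (fun hh => h02 hh.symm),
      if_neg h30] at t0
    apply hu0 0
    linarith
end

section
/- Let 𝓛 be a finite set of lines and Q a set of points such that each q ∈ Q lies on at least 2 lines of 𝓛, with the property that for each point the lines through it are paired into a matching E_q (pairs of lines through q), and suppose the union graph H on vertex set 𝓛 with edges ⋃_q E_q contains a complete bipartite graph K_{t,t} with parts 𝓛′₁, 𝓛′₂. Then for every ℓ₁ ∈ 𝓛′₁ and ℓ₂ ∈ 𝓛′₂ the intersection point ℓ₁ ∩ ℓ₂ lies in Q, and all t² such intersection points are distinct. -/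
open scoped Classical in
/-- If the lines through each point `q ∈ Q` are paired into a matching `E q` (each edge
consisting of two distinct lines through `q`) and the union graph on `lines` contains a
`K_{t,t}` with parts `L₁, L₂`, then each pair `(ℓ₁, ℓ₂) ∈ L₁ × L₂` meets in a point of
`Q`, and these `t²` intersection points are distinct. -/
theorem stmt14 (t : ℕ) (lines Q : Finset (ℝ × ℝ))
    (E : ℝ × ℝ → Finset ((ℝ × ℝ) × (ℝ × ℝ)))
    (hE : ∀ q ∈ Q, ∀ e ∈ E q, e.1 ∈ lines ∧ e.2 ∈ lines ∧ e.1 ≠ e.2 ∧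
        q.2 = e.1.1 * q.1 + e.1.2 ∧ q.2 = e.2.1 * q.1 + e.2.2)
    (hmatch : ∀ q ∈ Q, ∀ e ∈ E q, ∀ e' ∈ E q, e ≠ e' →
        e.1 ≠ e'.1 ∧ e.1 ≠ e'.2 ∧ e.2 ≠ e'.1 ∧ e.2 ≠ e'.2)
    (L₁ L₂ : Finset (ℝ × ℝ)) (hL1 : L₁ ⊆ lines) (hL2 : L₂ ⊆ lines)
    (ht1 : L₁.card = t) (ht2 : L₂.card = t) (hdisj : Disjoint L₁ L₂)
    (hK : ∀ l₁ ∈ L₁, ∀ l₂ ∈ L₂, ∃ q ∈ Q, (l₁, l₂) ∈ E q ∨ (l₂, l₁) ∈ E q) :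
    (∀ l₁ ∈ L₁, ∀ l₂ ∈ L₂, ∃ q ∈ Q,
        q.2 = l₁.1 * q.1 + l₁.2 ∧ q.2 = l₂.1 * q.1 + l₂.2) ∧
    (Q.filter (fun q => ∃ l₁ ∈ L₁, ∃ l₂ ∈ L₂,
        q.2 = l₁.1 * q.1 + l₁.2 ∧ q.2 = l₂.1 * q.1 + l₂.2)).card = t * t := by
  -- two distinct lines meet in at most one point
  have uniq : ∀ (l l' q q' : ℝ × ℝ), l ≠ l' →
      q.2 = l.1 * q.1 + l.2 → q.2 = l'.1 * q.1 + l'.2 →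
      q'.2 = l.1 * q'.1 + l.2 → q'.2 = l'.1 * q'.1 + l'.2 → q = q' := by
    intro l l' q q' hll h1 h2 h3 h4
    have ha : l.1 ≠ l'.1 := by
      intro h
      apply hll
      have : l.2 = l'.2 := by
        have := h1.symm.trans h2
        rw [h] at this; linarith
      exact Prod.ext h this
    have hx : q.1 = q'.1 := by
      have e1 : (l.1 - l'.1) * q.1 = l'.2 - l.2 := by ring_nf; linarith
      have e2 : (l.1 - l'.1) * q'.1 = l'.2 - l.2 := by ring_nf; linarith
      have := e1.trans e2.symm
      exact mul_left_cancel₀ (sub_ne_zero.mpr ha) this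
    have hy : q.2 = q'.2 := by rw [h1, h3, hx]
    exact Prod.ext hx hy
  have hne12 : ∀ l₁ ∈ L₁, ∀ l₂ ∈ L₂, l₁ ≠ l₂ := by
    intro l₁ h1 l₂ h2 h
    exact (Finset.disjoint_left.mp hdisj) h1 (h ▸ h2)
  choose! g hgQ hgE using hK
  have hgline : ∀ l₁ ∈ L₁, ∀ l₂ ∈ L₂,
      (g l₁ l₂).2 = l₁.1 * (g l₁ l₂).1 + l₁.2 ∧
      (g l₁ l₂).2 = l₂.1 * (g l₁ l₂).1 + l₂.2 := by
    intro l₁ h1 l₂ h2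
    rcases hgE l₁ h1 l₂ h2 with he | he
    · have := hE _ (hgQ l₁ h1 l₂ h2) _ he
      exact ⟨this.2.2.2.1, this.2.2.2.2⟩
    · have := hE _ (hgQ l₁ h1 l₂ h2) _ he
      exact ⟨this.2.2.2.2, this.2.2.2.1⟩
  -- the chosen point is THE intersection point
  have hgeq : ∀ l₁ ∈ L₁, ∀ l₂ ∈ L₂, ∀ q,
      q.2 = l₁.1 * q.1 + l₁.2 → q.2 = l₂.1 * q.1 + l₂.2 → g l₁ l₂ = q := by
    intro l₁ h1 l₂ h2 q hq1 hq2
    exact uniq l₁ l₂ _ q (hne12 l₁ h1 l₂ h2) (hgline l₁ h1 l₂ h2).1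
      (hgline l₁ h1 l₂ h2).2 hq1 hq2
  -- no point of Q lies on two lines of L₁ and one of L₂
  have key1 : ∀ q, q ∈ Q → ∀ l₁ ∈ L₁, ∀ l₁' ∈ L₁, ∀ l₂ ∈ L₂, l₁ ≠ l₁' →
      q.2 = l₁.1 * q.1 + l₁.2 → q.2 = l₁'.1 * q.1 + l₁'.2 →
      q.2 = l₂.1 * q.1 + l₂.2 → False := by
    intro q hq l₁ h1 l₁' h1' l₂ h2 hne hq1 hq1' hq2
    have e1 := hgeq l₁ h1 l₂ h2 q hq1 hq2
    have e2 := hgeq l₁' h1' l₂ h2 q hq1' hq2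
    have he1 := hgE l₁ h1 l₂ h2
    have he2 := hgE l₁' h1' l₂ h2
    rw [e1] at he1; rw [e2] at he2
    have d1 := hne12 l₁ h1 l₂ h2
    have d2 := hne12 l₁' h1' l₂ h2
    rcases he1 with he1 | he1 <;> rcases he2 with he2 | he2
    · have hne' : ((l₁, l₂) : (ℝ × ℝ) × (ℝ × ℝ)) ≠ (l₁', l₂) :=
        fun h => hne (congrArg Prod.fst h)
      exact (hmatch q hq _ he1 _ he2 hne').2.2.2 rfl
    · have hne' : ((l₁, l₂) : (ℝ × ℝ) × (ℝ × ℝ)) ≠ (l₂, l₁') :=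
        fun h => d1 (congrArg Prod.fst h)
      exact (hmatch q hq _ he1 _ he2 hne').2.2.1 rfl
    · have hne' : ((l₂, l₁) : (ℝ × ℝ) × (ℝ × ℝ)) ≠ (l₁', l₂) :=
        fun h => d2 (congrArg Prod.fst h).symm
      exact (hmatch q hq _ he1 _ he2 hne').2.1 rfl
    · have hne' : ((l₂, l₁) : (ℝ × ℝ) × (ℝ × ℝ)) ≠ (l₂, l₁') :=
        fun h => hne (congrArg Prod.snd h)
      exact (hmatch q hq _ he1 _ he2 hne').1 rfl
  -- no point of Q lies on one line of L₁ and two of L₂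
  have key2 : ∀ q, q ∈ Q → ∀ l₁ ∈ L₁, ∀ l₂ ∈ L₂, ∀ l₂' ∈ L₂, l₂ ≠ l₂' →
      q.2 = l₁.1 * q.1 + l₁.2 → q.2 = l₂.1 * q.1 + l₂.2 →
      q.2 = l₂'.1 * q.1 + l₂'.2 → False := by
    intro q hq l₁ h1 l₂ h2 l₂' h2' hne hq1 hq2 hq2'
    have e1 := hgeq l₁ h1 l₂ h2 q hq1 hq2
    have e2 := hgeq l₁ h1 l₂' h2' q hq1 hq2'
    have he1 := hgE l₁ h1 l₂ h2
    have he2 := hgE l₁ h1 l₂' h2'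
    rw [e1] at he1; rw [e2] at he2
    have d1 := hne12 l₁ h1 l₂ h2
    have d2 := hne12 l₁ h1 l₂' h2'
    rcases he1 with he1 | he1 <;> rcases he2 with he2 | he2
    · have hne' : ((l₁, l₂) : (ℝ × ℝ) × (ℝ × ℝ)) ≠ (l₁, l₂') :=
        fun h => hne (congrArg Prod.snd h)
      exact (hmatch q hq _ he1 _ he2 hne').1 rfl
    · have hne' : ((l₁, l₂) : (ℝ × ℝ) × (ℝ × ℝ)) ≠ (l₂', l₁) :=
        fun h => d2 (congrArg Prod.fst h)
      exact (hmatch q hq _ he1 _ he2 hne').2.1 rfl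
    · have hne' : ((l₂, l₁) : (ℝ × ℝ) × (ℝ × ℝ)) ≠ (l₁, l₂') :=
        fun h => d1 (congrArg Prod.fst h).symm
      exact (hmatch q hq _ he1 _ he2 hne').2.2.1 rfl
    · have hne' : ((l₂, l₁) : (ℝ × ℝ) × (ℝ × ℝ)) ≠ (l₂', l₁) :=
        fun h => hne (congrArg Prod.fst h)
      exact (hmatch q hq _ he1 _ he2 hne').2.2.2 rfl
  constructor
  · intro l₁ h1 l₂ h2
    exact ⟨g l₁ l₂, hgQ l₁ h1 l₂ h2, hgline l₁ h1 l₂ h2⟩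
  · have himg : Q.filter (fun q => ∃ l₁ ∈ L₁, ∃ l₂ ∈ L₂,
        q.2 = l₁.1 * q.1 + l₁.2 ∧ q.2 = l₂.1 * q.1 + l₂.2)
        = (L₁ ×ˢ L₂).image (fun p => g p.1 p.2) := by
      ext q
      simp only [Finset.mem_filter, Finset.mem_image, Finset.mem_product]
      constructor
      · rintro ⟨hq, l₁, h1, l₂, h2, hq1, hq2⟩
        exact ⟨(l₁, l₂), ⟨h1, h2⟩, hgeq l₁ h1 l₂ h2 q hq1 hq2⟩
      · rintro ⟨⟨l₁, l₂⟩, ⟨h1, h2⟩, rfl⟩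
        exact ⟨hgQ l₁ h1 l₂ h2, l₁, h1, l₂, h2, hgline l₁ h1 l₂ h2⟩
    rw [himg, Finset.card_image_of_injOn, Finset.card_product, ht1, ht2]
    rintro ⟨l₁, l₂⟩ hp ⟨l₁', l₂'⟩ hp' heq
    simp only [Finset.mem_coe, Finset.mem_product] at hp hp'
    obtain ⟨h1, h2⟩ := hp
    obtain ⟨h1', h2'⟩ := hp'
    have heq' : g l₁ l₂ = g l₁' l₂' := heq
    have hq : g l₁ l₂ ∈ Q := hgQ l₁ h1 l₂ h2
    have hl1 := (hgline l₁ h1 l₂ h2).1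
    have hl2 := (hgline l₁ h1 l₂ h2).2
    have hl1' : (g l₁ l₂).2 = l₁'.1 * (g l₁ l₂).1 + l₁'.2 := by
      rw [heq']; exact (hgline l₁' h1' l₂' h2').1
    have hl2' : (g l₁ l₂).2 = l₂'.1 * (g l₁ l₂).1 + l₂'.2 := by
      rw [heq']; exact (hgline l₁' h1' l₂' h2').2
    have e1 : l₁ = l₁' := by
      by_contra hne
      exact key1 _ hq l₁ h1 l₁' h1' l₂ h2 hne hl1 hl1' hl2
    have e2 : l₂ = l₂' := by
      by_contra hne
      exact key2 _ hq l₁ h1 l₂ h2 l₂' h2' hne hl1 hl2 hl2'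
    simp [e1, e2]
end
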